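/- Let d ≥ 1 and let p, q ∈ (2^{−d}, 1) satisfy 2^d p q ≥ 1. Then there exists a constant C > 0 depending only on d, p, q such that for every 1 ≤ m ≤ n and every nonempty set A ⊆ Δ_n := [−2^{n−1}, 2^{n−1})^d ∩ ℤ^d, P((Q_d(p;m) + Q̂_d(q;n)) ∩ A ≠ ∅) ≤ C·q^{n − max(m, log₂(diam(A) ∨ 1))}. -/

import Mathlib

/-!
If `(Q + Q̂) ∩ A ≠ ∅` for some `Q ⊆ Δ_m`, then `Q̂` contains a point of `A - Δ_m`, a box of side
about `2^L` with `L = max(m, ⌈log₂ (diam A ∨ 1)⌉)`. This box meets at most `4^d` of the dyadic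
cubes of side `2^L` in `Δ_n`, and `Q̂` meets a given one of them only if the `n - L` edges from the
root of the tree down to that cube are all open, which has probability `q^(n-L)`. A union bound
gives `4^d q^(n-L) ≤ (4^d / q) q^(n - max(m, log₂ (diam A ∨ 1)))`.
-/

open MeasureTheory ProbabilityTheory Set Pointwise
open scoped ENNReal Classical

noncomputable section

/-- The lattice `ℤ^d`. -/
abbrev Zd (d : ℕ) := Fin d → ℤ

/-- Euclidean distance on `ℤ^d`. -/
def zdist {d : ℕ} (x y : Zd d) : ℝ := Real.sqrt (∑ i, ((x i - y i : ℤ) : ℝ) ^ 2)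

/-- Euclidean norm on `ℤ^d`. -/
def znorm {d : ℕ} (x : Zd d) : ℝ := Real.sqrt (∑ i, ((x i : ℤ) : ℝ) ^ 2)

/-- Euclidean diameter of a subset of `ℤ^d`. -/
def zdiam {d : ℕ} (A : Set (Zd d)) : ℝ := sSup {r : ℝ | ∃ x ∈ A, ∃ y ∈ A, r = zdist x y}

/-- The set of energies `Σ_{x,y∈A} μ(x)μ(y)(|x-y| ∨ 1)^(-β)` of probability measures `μ`
supported on `A`. -/
def discEnergies {d : ℕ} (β : ℝ) (A : Set (Zd d)) : Set ℝ :=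
  { E | ∃ μ : Zd d → ℝ, (∀ x, 0 ≤ μ x) ∧ (∀ x, x ∉ A → μ x = 0) ∧ HasSum μ 1 ∧
        E = ∑' x, ∑' y, μ x * μ y * (max (zdist x y) 1) ^ (-β) }

/-- Discrete Newtonian capacity with parameter `β` (it equals `0` for `A = ∅`,
since `sInf ∅ = 0` and `0⁻¹ = 0` in `ℝ`). -/
def discCap {d : ℕ} (β : ℝ) (A : Set (Zd d)) : ℝ := (sInf (discEnergies β A))⁻¹

/-- The box `Δ_k = [-2^(k-1), 2^(k-1))^d ∩ ℤ^d`. -/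
def box (d k : ℕ) : Set (Zd d) := {x | ∀ i, -(2:ℤ)^(k-1) ≤ x i ∧ x i < (2:ℤ)^(k-1)}

/-- Edges of the complete `2^d`-ary tree of height `k`: the edge `(j, v)` joins the vertex
at depth `j+1` whose coordinatewise binary code is `v` to its parent. -/
abbrev TreeEdge (d k : ℕ) := Fin k × Zd d

/-- The coordinatewise binary code of the depth-`j` ancestor (in the `2^d`-ary tree of height
`k`) of the leaf corresponding to the lattice point `x ∈ Δ_k`; the code of a depth-`j`
vertex consists of the `j` most significant base-2 digits of each coordinate of `x + 2^(k-1)`. -/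
def ancestorCode (d k j : ℕ) (x : Zd d) : Zd d := fun i => (x i + 2 ^ (k - 1)) / 2 ^ (k - j)

/-- The discrete fractal percolation set `Q_d(p;k)` determined by a configuration `ω` of
open/closed edges of the `2^d`-ary tree of height `k`: the points of `Δ_k` whose
root-to-leaf path consists of open edges only. -/
def percCluster (d k : ℕ) (ω : TreeEdge d k → Bool) : Set (Zd d) :=
  {x | x ∈ box d k ∧ ∀ j : Fin k, ω (j, ancestorCode d k ((j : ℕ) + 1) x) = true}


lemma abs_sub_le_zdist {d : ℕ} (x y : Zd d) (i : Fin d) : |(x i - y i : ℝ)| ≤ zdist x y := by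
  rw [zdist, ← Real.sqrt_sq_eq_abs]
  apply Real.sqrt_le_sqrt
  calc ((x i : ℝ) - y i) ^ 2 = ((x i - y i : ℤ) : ℝ) ^ 2 := by push_cast; ring
    _ ≤ _ := Finset.single_le_sum (f := fun j => ((x j - y j : ℤ) : ℝ) ^ 2)
        (fun j _ => by positivity) (Finset.mem_univ i)

lemma box_finite (d k : ℕ) : (box d k).Finite := by
  have : box d k = Set.univ.pi fun _ => Set.Ico (-(2:ℤ) ^ (k - 1)) (2 ^ (k - 1)) := by
    ext x; simp [box]
  rw [this]
  exact Set.Finite.pi fun _ => Set.finite_Ico _ _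

lemma zdist_le_zdiam {d : ℕ} {A : Set (Zd d)} (hA : A.Finite) {x y : Zd d} (hx : x ∈ A)
    (hy : y ∈ A) : zdist x y ≤ zdiam A := by
  refine le_csSup ((hA.image2 zdist hA).bddAbove.mono ?_) ⟨x, hx, y, hy, rfl⟩
  rintro _ ⟨x, hx, y, hy, rfl⟩
  exact ⟨x, hx, y, hy, rfl⟩

lemma le_two_pow_ceil_logb (x : ℝ) : x ≤ 2 ^ ⌈Real.logb 2 (max x 1)⌉₊ := by
  calc x ≤ max x 1 := le_max_left _ _
    _ = 2 ^ Real.logb 2 (max x 1) :=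
        (Real.rpow_logb (by norm_num) (by norm_num) (by positivity)).symm
    _ ≤ 2 ^ (⌈Real.logb 2 (max x 1)⌉₊ : ℝ) :=
        Real.rpow_le_rpow_of_exponent_le (by norm_num) (Nat.le_ceil _)
    _ = _ := Real.rpow_natCast 2 _

lemma percCluster_subset_box (d k : ℕ) (ω : TreeEdge d k → Bool) :
    percCluster d k ω ⊆ box d k :=
  fun _ hx => hx.1

lemma ancestorCode_eq_ediv {d n r j : ℕ} (hj : j ≤ r) (hr : r ≤ n) (x : Zd d) :
    ancestorCode d n j x = fun i => ancestorCode d n r x i / 2 ^ (r - j) := by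
  funext i
  rw [ancestorCode, ancestorCode, Int.ediv_ediv_of_nonneg (by positivity), ← pow_add]
  congr 2
  omega

/-- The `j`-th edge on the path from the root down to the depth-`r` vertex with code `v`. -/
def pathEdge {d n r : ℕ} (hr : r ≤ n) (v : Zd d) (j : Fin r) : TreeEdge d n :=
  (Fin.castLE hr j, fun i => v i / 2 ^ (r - (j + 1)))

lemma pathEdge_injective {d n r : ℕ} (hr : r ≤ n) (v : Zd d) :
    Function.Injective (pathEdge hr v) :=
  fun _ _ h => Fin.castLE_injective hr (congrArg Prod.fst h)

lemma percCluster_pathEdge {d n r : ℕ} (hr : r ≤ n) {ω : TreeEdge d n → Bool} {x : Zd d}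
    (hx : x ∈ percCluster d n ω) (j : Fin r) :
    ω (pathEdge hr (ancestorCode d n r x) j) = true := by
  have := hx.2 (Fin.castLE hr j)
  rwa [Fin.val_castLE, ancestorCode_eq_ediv (show (j : ℕ) + 1 ≤ r from j.isLt) hr] at this

lemma measure_iInter_eq_true {ι Ω : Type*} [MeasurableSpace Ω] {P : Measure Ω}
    {Y : ι → Ω → Bool} (hY : iIndepFun Y P) {q : ℝ≥0∞}
    (hq : ∀ e, P {ω | Y e ω = true} = q)
    (S : Finset ι) : P (⋂ e ∈ S, {ω | Y e ω = true}) = q ^ S.card := by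
  have := hY.measure_inter_preimage_eq_mul S (sets := fun _ => {true})
    (fun _ _ => measurableSet_singleton true)
  simp only [Set.preimage, Set.mem_singleton_iff] at this
  rw [this, Finset.prod_congr rfl fun e _ => hq e, Finset.prod_const]

lemma measure_exists_ancestorCode_mem_le {Ω : Type*} [MeasurableSpace Ω] {P : Measure Ω}
    {d n r : ℕ} (hr : r ≤ n) {Y : TreeEdge d n → Ω → Bool} (hY : iIndepFun Y P)
    {q : ℝ≥0∞} (hq : ∀ e, P {ω | Y e ω = true} = q) (W : Finset (Zd d)) :
    P {ω | ∃ x ∈ percCluster d n (fun e => Y e ω), ancestorCode d n r x ∈ W} ≤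
      W.card * q ^ r :=
  let path v := Finset.univ.map ⟨pathEdge hr v, pathEdge_injective hr v⟩
  calc _ ≤ P (⋃ v ∈ W, ⋂ e ∈ path v, {ω | Y e ω = true}) := by
        refine measure_mono fun ω ⟨x, hx, hxW⟩ => Set.mem_biUnion hxW ?_
        simpa [path] using percCluster_pathEdge hr hx
    _ ≤ ∑ v ∈ W, P (⋂ e ∈ path v, {ω | Y e ω = true}) := measure_biUnion_finset_le _ _
    _ = W.card * q ^ r := by
        rw [Finset.sum_congr rfl fun v _ => measure_iInter_eq_true hY hq (path v)]
        simp [path]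

/-- The `4^d` codes of the dyadic cubes of side `2^L` meeting `c + [0, 3·2^L]^d`. -/
def codeWindow {d : ℕ} (L : ℕ) (c : Zd d) : Finset (Zd d) :=
  Fintype.piFinset fun i => Finset.Icc (c i / 2 ^ L) (c i / 2 ^ L + 3)

lemma card_codeWindow {d : ℕ} (L : ℕ) (c : Zd d) : (codeWindow L c).card = 4 ^ d := by
  simp [codeWindow, Int.card_Icc, add_assoc]

lemma Int.ediv_mem_Icc_of_mem_Icc {b c z k : ℤ} (hb : 0 < b) (hz : z ∈ Set.Icc c (c + k * b)) :
    z / b ∈ Set.Icc (c / b) (c / b + k) := by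
  refine ⟨Int.ediv_le_ediv hb hz.1, ?_⟩
  calc z / b ≤ (c + k * b) / b := Int.ediv_le_ediv hb hz.2
    _ = c / b + k := Int.add_mul_ediv_right _ _ hb.ne'

lemma ancestorCode_mem_codeWindow {d m n K L : ℕ} (hm : 1 ≤ m) (hmL : m ≤ L) (hKL : K ≤ L)
    (hLn : L ≤ n) {a₀ a x y : Zd d} (ha : ∀ i, |a i - a₀ i| ≤ 2 ^ K) (hx : x ∈ box d m)
    (hxy : x + y = a) :
    ancestorCode d n (n - L) y ∈
      codeWindow L fun i => a₀ i + 2 ^ (n - 1) - 2 ^ K - 2 ^ (m - 1) := by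
  simp only [codeWindow, Fintype.mem_piFinset, Finset.mem_Icc, ancestorCode,
    Nat.sub_sub_self hLn]
  intro i
  have hK : (2:ℤ) ^ K ≤ 2 ^ L := pow_le_pow_right₀ (by norm_num) hKL
  have hm' : (2:ℤ) ^ (m - 1) * 2 ≤ 2 ^ L :=
    (pow_sub_one_mul (by omega) 2).trans_le (pow_le_pow_right₀ (by norm_num) hmL)
  have hyi : y i = a i - x i := by rw [← hxy]; simp
  obtain ⟨ha₁, ha₂⟩ := abs_le.mp (ha i)
  obtain ⟨hx₁, hx₂⟩ := hx i
  exact Int.ediv_mem_Icc_of_mem_Icc (by positivity) ⟨by linarith, by linarith⟩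

lemma measure_add_percCluster_inter_nonempty_le {Ω : Type*} [MeasurableSpace Ω]
    {P : Measure Ω} [IsProbabilityMeasure P] {d m n K L : ℕ} (hm : 1 ≤ m) (hmL : m ≤ L)
    (hKL : K ≤ L) {Y : TreeEdge d n → Ω → Bool} (hY : iIndepFun Y P) {q : ℝ≥0∞}
    (hq : ∀ e, P {ω | Y e ω = true} = q) {S : Ω → Set (Zd d)} (hS : ∀ ω, S ω ⊆ box d m)
    {A : Set (Zd d)} {a₀ : Zd d} (hA : ∀ a ∈ A, ∀ i, |a i - a₀ i| ≤ 2 ^ K) :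
    P {ω | ((S ω + percCluster d n (fun e => Y e ω)) ∩ A).Nonempty} ≤
      4 ^ d * q ^ (n - L) := by
  rcases lt_or_ge n L with hnL | hLn
  · rw [Nat.sub_eq_zero_of_le hnL.le, pow_zero, mul_one]
    exact prob_le_one.trans (one_le_pow₀ (by norm_num))
  calc _ ≤ P {ω | ∃ y ∈ percCluster d n (fun e => Y e ω), ancestorCode d n (n - L) y ∈
          codeWindow L fun i => a₀ i + 2 ^ (n - 1) - 2 ^ K - 2 ^ (m - 1)} := by
        refine measure_mono fun ω ⟨a, ⟨x, hx, y, hy, hxy⟩, haA⟩ => ⟨y, hy, ?_⟩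
        exact ancestorCode_mem_codeWindow hm hmL hKL hLn (hA a haA) (hS ω hx) hxy
    _ ≤ 4 ^ d * q ^ (n - L) := by
        refine (measure_exists_ancestorCode_mem_le (Nat.sub_le n L) hY hq _).trans_eq ?_
        rw [card_codeWindow]
        norm_cast

lemma sub_max_le_sub_max_ceil_add_one (n m : ℕ) {t : ℝ} (ht : 0 ≤ t) :
    (n : ℝ) - max (m : ℝ) t ≤ ((n - max m ⌈t⌉₊ : ℕ) : ℝ) + 1 := by
  have hceil := Nat.ceil_lt_add_one ht
  have hmax : ((max m ⌈t⌉₊ : ℕ) : ℝ) ≤ max (m : ℝ) t + 1 := by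
    rw [Nat.cast_max]
    exact max_le (by linarith [le_max_left (m : ℝ) t]) (by linarith [le_max_right (m : ℝ) t])
  rcases le_total (max m ⌈t⌉₊) n with h | h
  · rw [Nat.cast_sub h]; linarith
  · rw [Nat.sub_eq_zero_of_le h]
    have : (n : ℝ) ≤ _ := Nat.cast_le.mpr h
    linarith

lemma pow_le_inv_mul_rpow {q : ℝ} (hq0 : 0 < q) (hq1 : q ≤ 1) {r : ℕ} {t : ℝ}
    (h : t ≤ r + 1) :
    q ^ r ≤ q⁻¹ * q ^ t := by
  rw [inv_mul_eq_div, ← Real.rpow_sub_one hq0.ne', ← Real.rpow_natCast]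
  exact Real.rpow_le_rpow_of_exponent_ge hq0 hq1 (by linarith)

theorem statement14_general (d : ℕ) (p q : ℝ)
    (hq : q ∈ Set.Ioo (((2:ℝ) ^ d)⁻¹) 1) :
    ∃ C : ℝ, 0 < C ∧
      ∀ (m n : ℕ), 1 ≤ m → m ≤ n →
      ∀ (Ω : Type) (mΩ : MeasurableSpace Ω) (P : Measure Ω),
        IsProbabilityMeasure P →
      ∀ X : TreeEdge d m ⊕ TreeEdge d n → Ω → Bool,
        (∀ e, Measurable (X e)) →
        iIndepFun X P →
        (∀ e, P {ω | X (Sum.inl e) ω = true} = ENNReal.ofReal p) →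
        (∀ e, P {ω | X (Sum.inr e) ω = true} = ENNReal.ofReal q) →
      ∀ A : Set (Zd d), A.Nonempty → A ⊆ box d n →
        P {ω | ((percCluster d m (fun e => X (Sum.inl e) ω) +
                 percCluster d n fun e => X (Sum.inr e) ω) ∩ A).Nonempty} ≤
          ENNReal.ofReal (C *
            q ^ ((n : ℝ) - max (m : ℝ) (Real.logb 2 (max (zdiam A) 1)))) := by
  have hq0 : 0 < q := lt_trans (by positivity) hq.1
  refine ⟨4 ^ d / q, by positivity, ?_⟩
  intro m n hm _ Ω _ P _ X _ hX _ hXq A ⟨a₀, ha₀⟩ hAn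
  set t := Real.logb 2 (max (zdiam A) 1)
  have hA : ∀ a ∈ A, ∀ i, |a i - a₀ i| ≤ (2:ℤ) ^ ⌈t⌉₊ := fun a ha i => by
    have := (abs_sub_le_zdist a a₀ i).trans <|
      (zdist_le_zdiam ((box_finite d n).subset hAn) ha ha₀).trans (le_two_pow_ceil_logb _)
    exact_mod_cast this
  calc _ ≤ 4 ^ d * ENNReal.ofReal q ^ (n - max m ⌈t⌉₊) :=
        measure_add_percCluster_inter_nonempty_le hm (le_max_left _ _) (le_max_right _ _)
          (hX.precomp Sum.inr_injective) hXq (fun _ => percCluster_subset_box d m _) hA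
    _ = ENNReal.ofReal (4 ^ d * q ^ (n - max m ⌈t⌉₊)) := by
        rw [ENNReal.ofReal_mul (by positivity), ENNReal.ofReal_pow hq0.le]
        norm_cast
    _ ≤ _ := by
        rw [div_mul_eq_mul_div, mul_div_assoc, div_eq_inv_mul]
        refine ENNReal.ofReal_le_ofReal (mul_le_mul_of_nonneg_left ?_ (by positivity))
        exact pow_le_inv_mul_rpow hq0 hq.2.le (sub_max_le_sub_max_ceil_add_one n m
          (Real.logb_nonneg one_lt_two (le_max_right _ _)))

/-- Upper bound for the hitting probability of the Minkowski sum of two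
independent fractal percolations when `2^d p q ≥ 1`. -/
theorem statement14 (d : ℕ) (hd : 1 ≤ d) (p q : ℝ)
    (hp : p ∈ Set.Ioo (((2:ℝ) ^ d)⁻¹) 1) (hq : q ∈ Set.Ioo (((2:ℝ) ^ d)⁻¹) 1)
    (hpq : 1 ≤ 2 ^ d * p * q) :
    ∃ C : ℝ, 0 < C ∧
      ∀ (m n : ℕ), 1 ≤ m → m ≤ n →
      ∀ (Ω : Type) (mΩ : MeasurableSpace Ω) (P : Measure Ω),
        IsProbabilityMeasure P →
      ∀ X : TreeEdge d m ⊕ TreeEdge d n → Ω → Bool,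
        (∀ e, Measurable (X e)) →
        iIndepFun X P →
        (∀ e, P {ω | X (Sum.inl e) ω = true} = ENNReal.ofReal p) →
        (∀ e, P {ω | X (Sum.inr e) ω = true} = ENNReal.ofReal q) →
      ∀ A : Set (Zd d), A.Nonempty → A ⊆ box d n →
        P {ω | ((percCluster d m (fun e => X (Sum.inl e) ω) +
                 percCluster d n fun e => X (Sum.inr e) ω) ∩ A).Nonempty} ≤
          ENNReal.ofReal (C *
            q ^ ((n : ℝ) - max (m : ℝ) (Real.logb 2 (max (zdiam A) 1)))) :=
  statement14_general d p q hq
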